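/- Let k ≥ 2 be even. Define μ on {-1,1}^k by: μ(x) = 1/(k+2) if x = (1,...,1); μ(x) = (1/2)·(1/C(k,k/2)) if Σ_{i=1}^k x_i = 0; μ(x) = (k/(2k+4))·(1/C(k,1+k/2)) if Σ_{i=1}^k x_i = -2; and μ(x) = 0 otherwise, where C(n,m) denotes the binomial coefficient. Then μ is a probability distribution (its total mass is 1), every coordinate has expectation 0 under μ, and for every pair of distinct coordinates i ≠ j the expectation of x_i · x_j under μ is 0. -/

import Mathlib

/-!
The weight `muEven k` is invariant under permutations of the coordinates, and it depends on `x`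
only through `S x = ∑ i, sgn (x i)`, spreading the mass of each level set `{S = 2m - k}` evenly over its
`C(k, m)` points. Hence `S` takes the values `k`, `0`, `-2` with probabilities `1/(k+2)`, `1/2`,
`k/(2k+4)`, so that `E[S] = 0` and `E[S²] = k`. Exchangeability gives `k E[x_i] = E[S]` and
`E[S²] = k + k(k-1) E[x_i x_j]` for `i ≠ j`, so both moments vanish.
-/

/-- The ±1 sign associated to a boolean coordinate. -/
noncomputable def sgn (b : Bool) : ℝ := if b then 1 else -1

/-- The distribution from Fact 2.9 (even case): mass `1/(k+2)` on the all-ones vector,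
mass `(1/2) / C(k,k/2)` on each vector whose coordinates sum to `0`, mass
`(k/(2k+4)) / C(k,1+k/2)` on each vector whose coordinates sum to `-2`, and `0` elsewhere. -/
noncomputable def muEven (k : ℕ) (x : Fin k → Bool) : ℝ :=
  if x = (fun _ => true) then 1 / (k + 2)
  else if (∑ i : Fin k, sgn (x i)) = 0 then
    (1 / 2) * (1 / (k.choose (k / 2)))
  else if (∑ i : Fin k, sgn (x i)) = -2 then
    ((k : ℝ) / (2 * k + 4)) * (1 / (k.choose (1 + k / 2)))
  else 0

open Finset

def Exchangeable {ι α : Type*} (w : (ι → α) → ℝ) : Prop :=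
  ∀ (σ : Equiv.Perm ι) x, w (x ∘ σ) = w x

theorem Exchangeable.sum_mul_comp_perm {ι α : Type*} [Fintype ι] [DecidableEq ι] [Fintype α]
    {w : (ι → α) → ℝ} (hw : Exchangeable w) (σ : Equiv.Perm ι) (F : (ι → α) → ℝ) :
    ∑ x, w x * F (x ∘ σ) = ∑ x, w x * F x := by
  calc ∑ x, w x * F (x ∘ σ) = ∑ x, w (x ∘ σ) * F (x ∘ σ) := by simp only [hw σ]
    _ = ∑ x, w x * F x := Equiv.sum_comp (σ.symm.arrowCongr (Equiv.refl α)) (w * F)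

theorem sgn_mul_self (b : Bool) : sgn b * sgn b = 1 := by
  cases b <;> norm_num [sgn]

section SignVectors

variable {ι : Type*} [Fintype ι]

theorem sum_sgn_eq (x : ι → Bool) :
    ∑ i, sgn (x i) = 2 * #{i | x i = true} - Fintype.card ι := by
  have hsgn : ∀ b : Bool, sgn b = 2 * (if b = true then 1 else 0) - 1 := by
    intro b; cases b <;> norm_num [sgn]
  rw [sum_congr rfl fun i _ => hsgn (x i), sum_sub_distrib, ← mul_sum, sum_boole]
  simp

theorem sum_sgn_eq_card_iff (x : ι → Bool) :
    ∑ i, sgn (x i) = Fintype.card ι ↔ x = fun _ => true := by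
  have hcount : #{i | x i = true} = Fintype.card ι ↔ x = fun _ => true := by
    simp [← card_univ, card_filter_eq_iff, funext_iff]
  rw [sum_sgn_eq, ← hcount]
  constructor
  · intro h
    exact_mod_cast (by linarith : (#{i | x i = true} : ℝ) = Fintype.card ι)
  · intro h
    rw [h]
    ring

variable [DecidableEq ι]

theorem card_filter_card_eq_choose (m : ℕ) :
    #{x : ι → Bool | #{i | x i = true} = m} = (Fintype.card ι).choose m := by
  rw [← card_univ, ← card_powersetCard]
  refine card_bij' (fun x _ => ({i | x i = true} : Finset ι)) (fun s _ i => decide (i ∈ s))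
    ?_ ?_ ?_ ?_
  · simp
  · simp
  · intro x _; ext i; simp
  · intro s _; ext i; simp

theorem card_filter_sum_sgn_eq {s : ℝ} (m : ℕ) (hs : s = 2 * m - Fintype.card ι) :
    #{x : ι → Bool | ∑ i, sgn (x i) = s} = (Fintype.card ι).choose m := by
  rw [← card_filter_card_eq_choose m]
  congr 1
  ext x
  simp only [mem_filter, mem_univ, true_and, sum_sgn_eq, hs]
  constructor
  · intro h; exact_mod_cast (by linarith : (#{i | x i = true} : ℝ) = m)
  · intro h; rw [h]

theorem sum_ite_sum_sgn_eq_mul (s c : ℝ) (G : ℝ → ℝ) :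
    ∑ x : ι → Bool, (if ∑ i, sgn (x i) = s then c else 0) * G (∑ i, sgn (x i)) =
      #{x : ι → Bool | ∑ i, sgn (x i) = s} * c * G s := by
  simp_rw [ite_mul, zero_mul]
  rw [← sum_filter, sum_congr rfl fun x hx => by rw [(mem_filter.mp hx).2]]
  simp [mul_assoc]

variable {w : (ι → Bool) → ℝ}

theorem Exchangeable.sum_mul_sgn_eq (hw : Exchangeable w) (i j : ι) :
    ∑ x, w x * sgn (x i) = ∑ x, w x * sgn (x j) := by
  simpa using hw.sum_mul_comp_perm (Equiv.swap j i) (fun x => sgn (x j))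

theorem Exchangeable.sum_mul_sgn_mul_sgn_eq (hw : Exchangeable w) {i j i' j' : ι}
    (hij : i ≠ j) (hij' : i' ≠ j') :
    ∑ x, w x * (sgn (x i) * sgn (x j)) = ∑ x, w x * (sgn (x i') * sgn (x j')) := by
  obtain ⟨σ, hσi, hσj⟩ :=
    MulAction.is_two_pretransitive_iff.mp (Equiv.Perm.isMultiplyPretransitive ι 2) hij' hij
  rw [← hσi, ← hσj]
  exact hw.sum_mul_comp_perm σ fun x => sgn (x i') * sgn (x j')

theorem Exchangeable.card_mul_sum_mul_sgn (hw : Exchangeable w) (i : ι) :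
    Fintype.card ι * ∑ x, w x * sgn (x i) = ∑ x, w x * ∑ j, sgn (x j) := by
  calc (Fintype.card ι : ℝ) * ∑ x, w x * sgn (x i) = ∑ j, ∑ x, w x * sgn (x j) := by
        simp [hw.sum_mul_sgn_eq _ i]
    _ = ∑ x, w x * ∑ j, sgn (x j) := by simp_rw [mul_sum]; exact sum_comm

theorem Exchangeable.card_mul_card_sub_one_mul_sum_mul_sgn_mul_sgn (hw : Exchangeable w)
    {i j : ι} (hij : i ≠ j) :
    Fintype.card ι * (Fintype.card ι - 1) * ∑ x, w x * (sgn (x i) * sgn (x j)) =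
      ∑ x, w x * (∑ a, sgn (x a)) ^ 2 - Fintype.card ι * ∑ x, w x := by
  set c := ∑ x, w x * (sgn (x i) * sgn (x j))
  have hrow : ∀ a, ∑ b, ∑ x, w x * (sgn (x a) * sgn (x b)) =
      ∑ x, w x + (Fintype.card ι - 1) * c := by
    intro a
    rw [← add_sum_erase _ _ (mem_univ a), sum_congr rfl fun b hb =>
      hw.sum_mul_sgn_mul_sgn_eq (ne_of_mem_erase hb).symm hij]
    simp [sgn_mul_self, card_erase_of_mem, Nat.cast_pred (Fintype.card_pos_iff.mpr ⟨i⟩), c]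
  have hsq : ∑ x, w x * (∑ a, sgn (x a)) ^ 2 =
      ∑ a, ∑ b, ∑ x, w x * (sgn (x a) * sgn (x b)) := by
    simp_rw [sq, sum_mul_sum, mul_sum]
    rw [sum_comm]
    exact sum_congr rfl fun a _ => sum_comm
  rw [hsq, sum_congr rfl fun a _ => hrow a]
  simp
  ring

end SignVectors

theorem muEven_exchangeable (k : ℕ) : Exchangeable (muEven k) := by
  intro σ x
  have hsum : ∑ i, sgn ((x ∘ σ) i) = ∑ i, sgn (x i) := Equiv.sum_comp σ (fun i => sgn (x i))
  have hones := sum_sgn_eq_card_iff (x ∘ σ)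
  rw [hsum, sum_sgn_eq_card_iff] at hones
  simp only [muEven, hsum, hones]

theorem muEven_nonneg (k : ℕ) (x : Fin k → Bool) : 0 ≤ muEven k x := by
  unfold muEven
  split_ifs <;> positivity

theorem muEven_eq_of_ne_zero {k : ℕ} (hk : k ≠ 0) (x : Fin k → Bool) :
    muEven k x =
      (if ∑ i, sgn (x i) = k then 1 / ((k : ℝ) + 2) else 0) +
      (if ∑ i, sgn (x i) = 0 then (1 / 2) * (1 / (k.choose (k / 2) : ℝ)) else 0) +
      (if ∑ i, sgn (x i) = -2 then ((k : ℝ) / (2 * k + 4)) * (1 / (k.choose (1 + k / 2)))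
        else 0) := by
  have hkR : (0 : ℝ) < k := by positivity
  have hones := sum_sgn_eq_card_iff x
  simp only [Fintype.card_fin] at hones
  simp only [muEven, ← hones]
  split_ifs <;> first | (exfalso; linarith) | ring

theorem sum_muEven_mul (k : ℕ) (hk : 2 ≤ k) (heven : Even k) (G : ℝ → ℝ) :
    ∑ x : Fin k → Bool, muEven k x * G (∑ i, sgn (x i)) =
      G k / (k + 2) + G 0 / 2 + k / (2 * k + 4) * G (-2) := by
  obtain ⟨m, rfl⟩ : ∃ m, k = 2 * m + 2 := by
    obtain ⟨t, rfl⟩ := heven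
    exact ⟨t - 1, by omega⟩
  simp only [muEven_eq_of_ne_zero (by omega : 2 * m + 2 ≠ 0), add_mul, sum_add_distrib,
    sum_ite_sum_sgn_eq_mul]
  have hcard_top :
      #{x : Fin (2 * m + 2) → Bool | ∑ i, sgn (x i) = ((2 * m + 2 : ℕ) : ℝ)} = 1 := by
    rw [card_filter_sum_sgn_eq (2 * m + 2) (by push_cast [Fintype.card_fin]; ring)]; simp
  have hcard_zero : #{x : Fin (2 * m + 2) → Bool | ∑ i, sgn (x i) = 0} =
      (2 * m + 2).choose (m + 1) := by
    rw [card_filter_sum_sgn_eq (m + 1) (by push_cast [Fintype.card_fin]; ring)]; simp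
  have hcard_neg_two : #{x : Fin (2 * m + 2) → Bool | ∑ i, sgn (x i) = -2} =
      (2 * m + 2).choose m := by
    rw [card_filter_sum_sgn_eq m (by push_cast [Fintype.card_fin]; ring)]; simp
  have hhalf : (2 * m + 2) / 2 = m + 1 := by omega
  have hsymm : (2 * m + 2).choose (1 + (m + 1)) = (2 * m + 2).choose m := by
    rw [← Nat.choose_symm (by omega)]; congr 1; omega
  have hpos : (0 : ℝ) < (2 * m + 2).choose (m + 1) := by exact_mod_cast Nat.choose_pos (by omega)
  have hpos' : (0 : ℝ) < (2 * m + 2).choose m := by exact_mod_cast Nat.choose_pos (by omega)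
  rw [hcard_top, hcard_zero, hcard_neg_two, hhalf, hsymm]
  field_simp
  ring

/-- For even `k ≥ 2`, `muEven k` is a probability distribution on `{-1,1}^k`
with mean-zero coordinates and pairwise-uncorrelated coordinates. -/
theorem stmt2 (k : ℕ) (hk : 2 ≤ k) (heven : Even k) :
    (∀ x, 0 ≤ muEven k x) ∧
    (∑ x : Fin k → Bool, muEven k x) = 1 ∧
    (∀ i : Fin k, (∑ x : Fin k → Bool, muEven k x * sgn (x i)) = 0) ∧
    (∀ i j : Fin k, i ≠ j →
      (∑ x : Fin k → Bool, muEven k x * (sgn (x i) * sgn (x j))) = 0) := by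
  have hkR : (2 : ℝ) ≤ k := by exact_mod_cast hk
  have hw := muEven_exchangeable k
  have hmass : ∑ x : Fin k → Bool, muEven k x = 1 := by
    have h := sum_muEven_mul k hk heven fun _ => 1
    simp only [mul_one] at h
    rw [h]; field_simp; ring
  have hfirst : ∑ x : Fin k → Bool, muEven k x * ∑ i, sgn (x i) = 0 :=
    (sum_muEven_mul k hk heven fun s => s).trans (by field_simp; ring)
  have hsecond : ∑ x : Fin k → Bool, muEven k x * (∑ i, sgn (x i)) ^ 2 = k :=
    (sum_muEven_mul k hk heven (· ^ 2)).trans (by field_simp; ring)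
  have hk0 : (k : ℝ) ≠ 0 := by positivity
  have hk1 : (k : ℝ) - 1 ≠ 0 := by linarith
  refine ⟨muEven_nonneg k, hmass, fun i => ?_, fun i j hij => ?_⟩
  · have h := hw.card_mul_sum_mul_sgn i
    rw [hfirst, Fintype.card_fin] at h
    exact (mul_eq_zero.mp h).resolve_left hk0
  · have h := hw.card_mul_card_sub_one_mul_sum_mul_sgn_mul_sgn hij
    rw [hsecond, hmass, Fintype.card_fin, mul_one, sub_self] at h
    exact (mul_eq_zero.mp h).resolve_left (mul_ne_zero hk0 hk1)
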